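/- Let L = K(η) be a simple algebraic valued extension with valuation v and e(L/K,v) = 1. Define the valuation ν on K[x] by ν(f) := v(f(η)). Let Q = {Q_i}_{i∈I} be a complete set for ν, i.e., for every f ∈ K[x] there exists i with deg(Q_i) ≤ deg(f) and ν(f) = ν_{Q_i}(f). For each i with Q_i(η) ≠ 0 choose a_i ∈ K with ν(Q_i) = v(a_i), and set Q̃_i = Q_i/a_i. Then the valuation ring O_L equals the O_K-subalgebra of L generated by the elements Q̃_i(η). -/

import Mathlib

/-!
An element of `O_L` is `f(η)` with `0 ≤ ν f`. By completeness there is `q = Q i` with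
`deg q ≤ deg f` such that `ν f` is the minimum of the values of the terms `fⱼ(η) q(η)ʲ` of the
`q`-expansion of `f`, so every term lies in `O_L`. Each term equals `(aᵢʲ fⱼ)(η) · Q̃ᵢ(η)ʲ`, where
`aᵢʲ fⱼ` has the same value as the term and degree `< deg q ≤ deg f`, so induction on the degree
concludes.
-/

/-- The truncation of `ν` at a monic polynomial `q`: the minimum of `ν (f_i * q^i)`
over the `q`-expansion `f = ∑ f_i q^i` (with `deg f_i < deg q`). -/
noncomputable def truncAdd {K Γ : Type*} [Field K] [AddCommGroup Γ] [LinearOrder Γ] [IsOrderedAddMonoid Γ]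
    (ν : Polynomial K → WithTop Γ) (q f : Polynomial K) : WithTop Γ :=
  (Finset.range (f.natDegree + 1)).inf fun i => ν ((f /ₘ q ^ i) %ₘ q * q ^ i)

open Polynomial

namespace Polynomial

variable {R : Type*} [CommRing R] {q : R[X]}

theorem divByMonic_pow_succ (hq : q.Monic) (f : R[X]) (n : ℕ) :
    f /ₘ q ^ (n + 1) = (f /ₘ q ^ n) /ₘ q := by
  nontriviality R
  have hqn : (q ^ n).Monic := hq.pow n
  have hdeg : (q ^ (n + 1)).degree = (q ^ n).degree + q.degree := by
    rw [pow_succ, hq.degree_mul]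
  refine (div_modByMonic_unique _ (f %ₘ q ^ n + q ^ n * ((f /ₘ q ^ n) %ₘ q))
    (hq.pow (n + 1)) ⟨?_, ?_⟩).1
  · calc f %ₘ q ^ n + q ^ n * ((f /ₘ q ^ n) %ₘ q) + q ^ (n + 1) * ((f /ₘ q ^ n) /ₘ q)
        = f %ₘ q ^ n + q ^ n * ((f /ₘ q ^ n) %ₘ q + q * ((f /ₘ q ^ n) /ₘ q)) := by ring
      _ = f := by rw [modByMonic_add_div, modByMonic_add_div]
  · refine (degree_add_le _ _).trans_lt (max_lt ?_ ?_)
    · calc (f %ₘ q ^ n).degree < (q ^ n).degree := degree_modByMonic_lt f hqn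
        _ ≤ (q ^ (n + 1)).degree := by
          rw [hdeg]; exact le_add_of_nonneg_right (zero_le_degree_iff.mpr hq.ne_zero)
    · rw [mul_comm, hqn.degree_mul, add_comm, hdeg, degree_eq_natDegree hqn.ne_zero]
      exact WithBot.add_lt_add_left WithBot.coe_ne_bot (degree_modByMonic_lt _ hq)

theorem eq_sum_modByMonic_mul_pow (hq : q.Monic) (hq0 : 0 < q.natDegree) (f : R[X]) :
    f = ∑ j ∈ Finset.range (f.natDegree + 1), (f /ₘ q ^ j) %ₘ q * q ^ j := by
  nontriviality R
  have partial_sum : ∀ n, f = ∑ j ∈ Finset.range n, (f /ₘ q ^ j) %ₘ q * q ^ j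
      + f /ₘ q ^ n * q ^ n := by
    intro n
    induction n with
    | zero => simp [divByMonic_one]
    | succ n ih =>
      conv_lhs => rw [ih, ← modByMonic_add_div (f /ₘ q ^ n) q]
      rw [Finset.sum_range_succ, divByMonic_pow_succ hq]
      ring
  have hvanish : f /ₘ q ^ (f.natDegree + 1) = 0 := by
    rw [divByMonic_eq_zero_iff (hq.pow _), degree_eq_natDegree (hq.pow _).ne_zero,
      hq.natDegree_pow]
    refine degree_le_natDegree.trans_lt (WithBot.coe_lt_coe.mpr ?_)
    nlinarith
  simpa [hvanish] using partial_sum (f.natDegree + 1)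

end Polynomial

theorem LinearOrderedAddCommGroupWithTop.eq_zero_of_add_self_eq {α : Type*}
    [LinearOrderedAddCommGroupWithTop α] {x : α} (hx : x ≠ ⊤) (h : x + x = x) : x = 0 := by
  have := add_neg_cancel_right_of_ne_top hx x
  rwa [h, add_neg_cancel_of_ne_top hx, eq_comm] at this

section CompleteSet

variable {K Γ ι : Type*} [Field K] [AddCommGroup Γ] [LinearOrder Γ] [IsOrderedAddMonoid Γ]

def IsCompleteSet (ν : K[X] → WithTop Γ) (Q : ι → K[X]) : Prop :=
  ∀ f : K[X], f ≠ 0 → ∃ i, (Q i).degree ≤ f.degree ∧ ν f = truncAdd ν (Q i) f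

theorem truncAdd_le (ν : K[X] → WithTop Γ) (q f : K[X]) {j : ℕ} (hj : j ≤ f.natDegree) :
    truncAdd ν q f ≤ ν ((f /ₘ q ^ j) %ₘ q * q ^ j) :=
  Finset.inf_le (Finset.mem_range_succ_iff.mpr hj)

variable {L : Type*} [Field L] [Algebra K L] (v : AddValuation L (WithTop Γ)) {η : L}

theorem aeval_mul_pow_mem {R : Subring L} {q g : K[X]} {c : K} {j : ℕ}
    (hc : aeval η q ≠ 0 → v (algebraMap K L c) = v (aeval η q))
    (hqR : aeval η q ≠ 0 → aeval η q / algebraMap K L c ∈ R)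
    (hg : 0 ≤ v (aeval η g * aeval η q ^ j))
    (ih : ∀ g' : K[X], g'.natDegree ≤ g.natDegree → 0 ≤ v (aeval η g') → aeval η g' ∈ R) :
    aeval η g * aeval η q ^ j ∈ R := by
  rcases eq_or_ne (aeval η q) 0 with hq0 | hq0
  · rcases j with _ | j
    · simpa using ih g le_rfl (by simpa using hg)
    · simp [hq0, R.zero_mem]
  have hc0 : algebraMap K L c ≠ 0 := fun h =>
    hq0 (v.top_iff.mp (by rw [← hc hq0, h, v.map_zero]))
  have hnorm : aeval η g * aeval η q ^ j =
      aeval η (C (c ^ j) * g) * (aeval η q / algebraMap K L c) ^ j := by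
    rw [map_mul, aeval_C, map_pow, div_pow]
    field_simp
  rw [hnorm]
  refine R.mul_mem (ih _ (natDegree_C_mul_le _ _) ?_) (R.pow_mem (hqR hq0) j)
  rwa [map_mul, aeval_C, v.map_mul, map_pow, v.map_pow, hc hq0, ← v.map_pow, add_comm,
    ← v.map_mul]

theorem aeval_mem_of_isCompleteSet {R : Subring L} {Q : ι → K[X]} {a : ι → K}
    (hQmon : ∀ i, (Q i).Monic) (hQdeg : ∀ i, 0 < (Q i).natDegree)
    (hcomplete : IsCompleteSet (fun g => v (aeval η g)) Q)
    (ha : ∀ i, aeval η (Q i) ≠ 0 → v (algebraMap K L (a i)) = v (aeval η (Q i)))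
    (hOR : ∀ c : K, 0 ≤ v (algebraMap K L c) → algebraMap K L c ∈ R)
    (hQR : ∀ i, aeval η (Q i) ≠ 0 → aeval η (Q i) / algebraMap K L (a i) ∈ R)
    (f : K[X]) (hf : 0 ≤ v (aeval η f)) : aeval η f ∈ R := by
  induction hn : f.natDegree using Nat.strong_induction_on generalizing f with
  | _ n ih =>
  rcases Nat.eq_zero_or_pos n with rfl | hn0
  · obtain ⟨c, rfl⟩ := natDegree_eq_zero.mp hn
    rw [aeval_C] at hf ⊢
    exact hOR c hf
  obtain ⟨i, hdeg, htrunc⟩ := hcomplete f (by rintro rfl; simp at hn; omega)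
  rw [eq_sum_modByMonic_mul_pow (hQmon i) (hQdeg i) f, map_sum]
  refine R.sum_mem fun j hj => ?_
  rw [map_mul, map_pow]
  refine aeval_mul_pow_mem v (ha i) (hQR i) ?_ fun g hg hg0 => ih _ ?_ g hg0 rfl
  · simpa only [map_mul, map_pow] using
      hf.trans (htrunc.trans_le (truncAdd_le _ _ _ (Finset.mem_range_succ_iff.mp hj)))
  · have hQ1 : Q i ≠ 1 := fun h => by simpa [h] using hQdeg i
    calc g.natDegree ≤ _ := hg
      _ < (Q i).natDegree := natDegree_modByMonic_lt _ (hQmon i) hQ1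
      _ ≤ n := hn ▸ natDegree_le_natDegree hdeg

end CompleteSet

theorem integers_generated_by_complete_set_general {K L Γ ι : Type*} [Field K] [Field L]
    [Algebra K L] [AddCommGroup Γ] [LinearOrder Γ] [IsOrderedAddMonoid Γ]
    (η : L) (hgen : Algebra.adjoin K {η} = ⊤)
    (v : L → WithTop Γ)
    (hv0 : ∀ x, v x = ⊤ ↔ x = 0)
    (hvmul : ∀ x y, v (x * y) = v x + v y)
    (hvadd : ∀ x y, min (v x) (v y) ≤ v (x + y))
    (Q : ι → Polynomial K)
    (hQmon : ∀ i, (Q i).Monic) (hQdeg : ∀ i, 1 ≤ (Q i).degree)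
    -- completeness of the set {Q_i} for ν = v ∘ ev_η
    (hcomplete : ∀ f : Polynomial K, f ≠ 0 → ∃ i, (Q i).degree ≤ f.degree ∧
      v (Polynomial.aeval η f) =
        truncAdd (fun g => v (Polynomial.aeval η g)) (Q i) f)
    (a : ι → K)
    (ha : ∀ i, Polynomial.aeval η (Q i) ≠ 0 →
      v (algebraMap K L (a i)) = v (Polynomial.aeval η (Q i))) :
    (Subring.closure
        ((algebraMap K L '' {c : K | 0 ≤ v (algebraMap K L c)}) ∪
          {x : L | ∃ i, Polynomial.aeval η (Q i) ≠ 0 ∧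
            x = Polynomial.aeval η (Q i) / algebraMap K L (a i)}) : Set L)
      = {x : L | 0 ≤ v x} := by
  have hv1 : v 1 = 0 :=
    LinearOrderedAddCommGroupWithTop.eq_zero_of_add_self_eq (mt (hv0 1).mp one_ne_zero)
      (by simpa using (hvmul 1 1).symm)
  let w : AddValuation L (WithTop Γ) := .of v ((hv0 0).mpr rfl) hv1 hvadd hvmul
  have hQnorm : ∀ i, aeval η (Q i) ≠ 0 → w (aeval η (Q i) / algebraMap K L (a i)) = 0 := by
    intro i hi
    rw [w.map_div, AddValuation.of_apply, AddValuation.of_apply, ha i hi]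
    exact LinearOrderedAddCommGroupWithTop.sub_self_eq_zero_of_ne_top (mt (hv0 _).mp hi)
  refine Set.Subset.antisymm (Subring.closure_le (t := w.toValuation.integer).mpr ?_)
    fun x hx => ?_
  · rintro _ (⟨c, hc, rfl⟩ | ⟨i, hi, rfl⟩)
    · exact hc
    · exact (hQnorm i hi).ge
  · obtain ⟨f, rfl⟩ : x ∈ Set.range (aeval (R := K) η) := by
      rw [← AlgHom.coe_range, ← Algebra.adjoin_singleton_eq_range_aeval, hgen]
      trivial
    refine aeval_mem_of_isCompleteSet w hQmon ?_ hcomplete ha ?_ ?_ f hx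
    · exact fun i =>
        natDegree_pos_iff_degree_pos.mpr (Nat.WithBot.one_le_iff_zero_lt.mp (hQdeg i))
    · exact fun c hc => Subring.subset_closure (.inl ⟨c, hc, rfl⟩)
    · exact fun i hi => Subring.subset_closure (.inr ⟨i, hi, rfl⟩)

/-- for a simple algebraic valued extension `L = K(η)` with
ramification index `1`, and a complete set `{Q_i}` for the induced valuation
`ν(f) = v(f(η))`, the valuation ring `O_L = {x | v x ≥ 0}` is generated, as a ring,
by (the image of) `O_K` together with the normalized elements `Q̃_i(η) = Q_i(η)/a_i`. -/
theorem integers_generated_by_complete_set {K L Γ ι : Type*} [Field K] [Field L]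
    [Algebra K L] [AddCommGroup Γ] [LinearOrder Γ] [IsOrderedAddMonoid Γ]
    (η : L) (hint : IsIntegral K η) (hgen : Algebra.adjoin K {η} = ⊤)
    (v : L → WithTop Γ)
    (hv0 : ∀ x, v x = ⊤ ↔ x = 0)
    (hvmul : ∀ x y, v (x * y) = v x + v y)
    (hvadd : ∀ x y, min (v x) (v y) ≤ v (x + y))
    -- ramification index 1: every value of `L` is a value of `K`
    (hram : ∀ x : L, x ≠ 0 → ∃ c : K, v (algebraMap K L c) = v x)
    (Q : ι → Polynomial K)
    (hQmon : ∀ i, (Q i).Monic) (hQdeg : ∀ i, 1 ≤ (Q i).degree)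
    -- completeness of the set {Q_i} for ν = v ∘ ev_η
    (hcomplete : ∀ f : Polynomial K, f ≠ 0 → ∃ i, (Q i).degree ≤ f.degree ∧
      v (Polynomial.aeval η f) =
        truncAdd (fun g => v (Polynomial.aeval η g)) (Q i) f)
    (a : ι → K)
    (ha : ∀ i, Polynomial.aeval η (Q i) ≠ 0 →
      v (algebraMap K L (a i)) = v (Polynomial.aeval η (Q i))) :
    (Subring.closure
        ((algebraMap K L '' {c : K | 0 ≤ v (algebraMap K L c)}) ∪
          {x : L | ∃ i, Polynomial.aeval η (Q i) ≠ 0 ∧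
            x = Polynomial.aeval η (Q i) / algebraMap K L (a i)}) : Set L)
      = {x : L | 0 ≤ v x} :=
  integers_generated_by_complete_set_general η hgen v hv0 hvmul hvadd Q hQmon hQdeg hcomplete a ha
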